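/- arXiv:2403.08209 — 2 statements merged into one kernel-verified Lean document; each statement's English description precedes it below -/
import Mathlib

section
/- For each k ≥ 2, consider the string w_k = ababc(bab)^k over the alphabet {a,b,c}. Then z^1(w_k) ≤ 8 (witnessed by the parsing a|b|ab|c|b|a|b|(bab)^{k−1} with the last phrase a self-referencing phrase of period 3), whereas the greedy 1-bounded parsing of w_k (phrases produced left to right, the phrase at position b being the longest prefix T[b..b+ℓ) of the remaining suffix such that for every 1 ≤ ℓ' ≤ ℓ there exists an occurrence of T[b..b+ℓ') starting before b whose use as source keeps all heights at most 1) has size at least 2k. Hence greedy height-bounded parsing can be a factor Ω(k) larger than optimal. -/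
variable {α : Type*}

/-- The substring `T[i..i+ℓ)` (0-indexed). -/
def sub (T : List α) (i ℓ : ℕ) : List α := (T.drop i).take ℓ

/-- `p` is a period of `w`: `0 < p ≤ |w|` and `w[i] = w[i+p]` whenever both sides exist. -/
def IsPeriod (w : List α) (p : ℕ) : Prop :=
  0 < p ∧ p ≤ w.length ∧ ∀ i, i + p < w.length → w[i]? = w[i + p]?

/-- The minimum period of `w`. -/
noncomputable def minPeriod (w : List α) : ℕ := sInf {p | IsPeriod w p}

/-- Starting position (0-indexed) of the `j`-th phrase (0-indexed) of a parsing,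
the parsing being given as a list of (length, source) pairs. -/
def startOf (P : List (ℕ × ℕ)) (j : ℕ) : ℕ := ((P.take j).map Prod.fst).sum

/-- Length of the `j`-th phrase. -/
def lenOf (P : List (ℕ × ℕ)) (j : ℕ) : ℕ := (P[j]?.map Prod.fst).getD 0

/-- Source of the `j`-th phrase. -/
def srcOf (P : List (ℕ × ℕ)) (j : ℕ) : ℕ := (P[j]?.map Prod.snd).getD 0

/-- `P` is an LZ-like encoding of `T`: phrases have positive length, cover `T`,
and every phrase of length at least 2 has a source strictly before its start with a
matching (possibly overlapping) previous occurrence. (Length-1 phrases are literal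
symbols; the symbol is determined by `T`, so it need not be stored.) -/
def IsLZ (T : List α) (P : List (ℕ × ℕ)) : Prop :=
  (∀ q ∈ P, 1 ≤ q.1) ∧ (P.map Prod.fst).sum = T.length ∧
  ∀ j < P.length, 2 ≤ lenOf P j →
    srcOf P j < startOf P j ∧
    sub T (srcOf P j) (lenOf P j) = sub T (startOf P j) (lenOf P j)

/-- `H` is the height function of the LZ-like encoding `P`:
`H i = 0` on length-1 phrases, and otherwise
`H i = H (s_j + (i - b_j) % (b_j - s_j)) + 1` for position `i` of phrase `j`. -/
def IsHeight (P : List (ℕ × ℕ)) (H : ℕ → ℕ) : Prop :=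
  ∀ j < P.length, ∀ i, startOf P j ≤ i → i < startOf P j + lenOf P j →
    (lenOf P j = 1 → H i = 0) ∧
    (2 ≤ lenOf P j →
      H i = H (srcOf P j + (i - startOf P j) % (startOf P j - srcOf P j)) + 1)

/-- The LZ-like encoding `P` of `T` is `h`-bounded. -/
def HBounded (T : List α) (P : List (ℕ × ℕ)) (h : ℕ) : Prop :=
  ∃ H : ℕ → ℕ, IsHeight P H ∧ ∀ i < T.length, H i ≤ h

/-- `z^h(T)`: minimum size of an `h`-bounded LZ-like encoding of `T`. -/
noncomputable def zh (T : List α) (h : ℕ) : ℕ :=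
  sInf {k | ∃ P : List (ℕ × ℕ), IsLZ T P ∧ HBounded T P h ∧ P.length = k}

/-- `lpf_T(b)`: length of the longest previous factor at position `b` (0-indexed). -/
noncomputable def lpf (T : List α) (b : ℕ) : ℕ :=
  sSup {l | b + l ≤ T.length ∧ ∃ s < b, sub T s l = sub T b l}

/-- Number of phrases of the greedy LZ77 parsing of `T[b..)`;
`lzCount T 0 = z(T)` is the size of the greedy LZ77 parsing of `T`. -/
noncomputable def lzCount (T : List α) (b : ℕ) : ℕ :=
  if hb : b < T.length then lzCount T (b + max 1 (lpf T b)) + 1 else 0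
termination_by T.length - b
decreasing_by
  have h1 : 1 ≤ max 1 (lpf T b) := le_max_left _ _
  omega

/-- Starting positions of the phrases of the greedy LZ77 parsing of `T` (from `b`). -/
noncomputable def lzStarts (T : List α) (b : ℕ) : List ℕ :=
  if hb : b < T.length then b :: lzStarts T (b + max 1 (lpf T b)) else []
termination_by T.length - b
decreasing_by
  have h1 : 1 ≤ max 1 (lpf T b) := le_max_left _ _
  omega

/-- Given the heights `H` of the positions before `b`, source `s` is a valid source
for a height-`h`-bounded phrase `T[b..b+ℓ)`: it is a (possibly overlapping) previous
occurrence whose use as source keeps all heights of the phrase at most `h`. -/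
def okSrc (T : List α) (h : ℕ) (H : ℕ → ℕ) (b ℓ s : ℕ) : Prop :=
  s < b ∧ b + ℓ ≤ T.length ∧ sub T s ℓ = sub T b ℓ ∧
  ∀ i < ℓ, H (s + i % (b - s)) + 1 ≤ h

/-- Length of the greedy `h`-bounded phrase at position `b`: the largest `ℓ` such
that for every `1 ≤ ℓ' ≤ ℓ` some occurrence of `T[b..b+ℓ')` starting before `b`
keeps all heights at most `h`. -/
noncomputable def ghLen (T : List α) (h : ℕ) (H : ℕ → ℕ) (b : ℕ) : ℕ :=
  sSup {ℓ | ∀ ℓ', 1 ≤ ℓ' → ℓ' ≤ ℓ → ∃ s, okSrc T h H b ℓ' s}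

/-- Number of phrases of the greedy `h`-bounded parsing of `T`, parsing from
position `b` with heights `H` of previous positions: the phrase at `b` is the
greedy `h`-bounded phrase (a literal of height 0 if no phrase of length at least 2
qualifies), sourced at the leftmost valid occurrence. -/
noncomputable def ghCount (T : List α) (h : ℕ) (b : ℕ) (H : ℕ → ℕ) : ℕ :=
  if hb : b < T.length then
    if hL : 2 ≤ ghLen T h H b then
      ghCount T h (b + ghLen T h H b)
        (fun i => if b ≤ i ∧ i < b + ghLen T h H b then
            H (sInf {s | okSrc T h H b (ghLen T h H b) s} +
               (i - b) % (b - sInf {s | okSrc T h H b (ghLen T h H b) s})) + 1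
          else H i) + 1
    else ghCount T h (b + 1) (Function.update H b 0) + 1
  else 0
termination_by T.length - b
decreasing_by
  · omega
  · omega

/-- The string `w_k = ababc(bab)^k` over the alphabet `{a, b, c}` (as `Fin 3`,
`a = 0`, `b = 1`, `c = 2`). -/
def wstr (k : ℕ) : List (Fin 3) :=
  [0, 1, 0, 1, 2] ++ (List.replicate k ([1, 0, 1] : List (Fin 3))).flatten


/-! ### Auxiliary lemmas -/

lemma getElem?_sub (T : List α) (s ℓ i : ℕ) :
    (sub T s ℓ)[i]? = if i < ℓ then T[s+i]? else none := by
  simp [sub, List.getElem?_take, List.getElem?_drop]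

lemma sub_eq (T : List α) {s b ℓ : ℕ} (h : ∀ i < ℓ, T[s+i]? = T[b+i]?) :
    sub T s ℓ = sub T b ℓ := by
  apply List.ext_getElem?
  intro n
  rw [getElem?_sub, getElem?_sub]
  split
  · exact h n ‹_›
  · rfl

lemma sub_eq_elim {T : List α} {s b ℓ : ℕ} (h : sub T s ℓ = sub T b ℓ) (i : ℕ) (hi : i < ℓ) :
    T[s+i]? = T[b+i]? := by
  have := congrArg (·[i]?) h
  simpa [getElem?_sub, hi] using this

lemma okSrc_mono {T : List α} {h : ℕ} {H : ℕ → ℕ} {b ℓ ℓ' s : ℕ}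
    (hok : okSrc T h H b ℓ s) (hle : ℓ' ≤ ℓ) : okSrc T h H b ℓ' s := by
  obtain ⟨h1, h2, h3, h4⟩ := hok
  refine ⟨h1, by omega, ?_, fun i hi => h4 i (lt_of_lt_of_le hi hle)⟩
  apply sub_eq
  intro i hi
  exact sub_eq_elim h3 i (lt_of_lt_of_le hi hle)

lemma ghLen_le_one {T : List α} {h : ℕ} {H : ℕ → ℕ} {b : ℕ}
    (h2 : ∀ s, ¬ okSrc T h H b 2 s) : ghLen T h H b ≤ 1 := by
  unfold ghLen
  have h0 : (0:ℕ) ∈ {ℓ | ∀ ℓ', 1 ≤ ℓ' → ℓ' ≤ ℓ → ∃ s, okSrc T h H b ℓ' s} := by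
    intro ℓ' h1 h2; omega
  apply csSup_le ⟨0, h0⟩
  intro ℓ hℓ
  by_contra hc
  obtain ⟨s, hs⟩ := hℓ 2 (by norm_num) (by omega)
  exact h2 s hs

lemma ghLen_eq_two {T : List α} {h : ℕ} {H : ℕ → ℕ} {b : ℕ}
    (h2 : ∃ s, okSrc T h H b 2 s) (h3 : ∀ s, ¬ okSrc T h H b 3 s) : ghLen T h H b = 2 := by
  unfold ghLen
  have hub : ∀ ℓ ∈ {ℓ | ∀ ℓ', 1 ≤ ℓ' → ℓ' ≤ ℓ → ∃ s, okSrc T h H b ℓ' s}, ℓ ≤ 2 := by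
    intro ℓ hℓ; by_contra hc
    obtain ⟨s, hs⟩ := hℓ 3 (by norm_num) (by omega)
    exact h3 s hs
  have hmem : 2 ∈ {ℓ | ∀ ℓ', 1 ≤ ℓ' → ℓ' ≤ ℓ → ∃ s, okSrc T h H b ℓ' s} := by
    intro ℓ' h1 hl2
    obtain ⟨s, hs⟩ := h2
    exact ⟨s, okSrc_mono hs hl2⟩
  exact le_antisymm (csSup_le ⟨2, hmem⟩ hub) (le_csSup ⟨2, hub⟩ hmem)

/-! ### Facts about `wstr` -/

def pat (i : ℕ) : Fin 3 :=
  if i < 5 then [0,1,0,1,2].getD i 0 else [1,0,1].getD ((i-5)%3) 0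

lemma wstr_length (k : ℕ) : (wstr k).length = 3*k+5 := by
  simp [wstr]
  omega

lemma flat_get : ∀ k j, j < 3*k →
    ((List.replicate k ([1,0,1] : List (Fin 3))).flatten)[j]? = some ([1,0,1].getD (j%3) 0) := by
  intro k
  induction k with
  | zero => intro j hj; omega
  | succ k ih =>
    intro j hj
    rw [List.replicate_succ, List.flatten_cons]
    rw [List.getElem?_append]
    simp only [List.length_cons, List.length_nil]
    by_cases hj3 : j < 3
    · rw [if_pos (by omega)]
      interval_cases j <;> rfl
    · rw [if_neg (by omega)]
      have h1 : j - (0+1+1+1) < 3*k := by omega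
      rw [ih _ h1]
      congr 2
      omega

lemma wget (k i : ℕ) (h : i < 3*k+5) : (wstr k)[i]? = some (pat i) := by
  unfold wstr pat
  rw [List.getElem?_append]
  simp only [List.length_cons, List.length_nil]
  by_cases h5 : i < 5
  · rw [if_pos (by omega), if_pos h5]
    interval_cases i <;> rfl
  · rw [if_neg (by omega), if_neg h5]
    rw [flat_get k _ (by omega : i - (0+1+1+1+1+1) < 3*k)]

lemma pat_mod0 {b : ℕ} (h5 : 5 ≤ b) (h3 : b % 3 = 0) : pat b = 0 := by
  unfold pat
  rw [if_neg (by omega), show (b-5)%3 = 1 by omega]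
  rfl

lemma pat_mod1 {b : ℕ} (h5 : 5 ≤ b) (h3 : b % 3 = 1) : pat b = 1 := by
  unfold pat
  rw [if_neg (by omega), show (b-5)%3 = 2 by omega]
  rfl

lemma pat_mod2 {b : ℕ} (h5 : 5 ≤ b) (h3 : b % 3 = 2) : pat b = 1 := by
  unfold pat
  rw [if_neg (by omega), show (b-5)%3 = 0 by omega]
  rfl

lemma pat_eq_of {k s b ℓ : ℕ} (hsub : sub (wstr k) s ℓ = sub (wstr k) b ℓ)
    {j : ℕ} (hj : j < ℓ) (hs : s + j < 3*k+5) (hb : b + j < 3*k+5) :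
    pat (s+j) = pat (b+j) := by
  have h := sub_eq_elim hsub j hj
  rw [wget k _ hs, wget k _ hb] at h
  exact Option.some_injective _ h

/-! ### The greedy height profile -/

def Hpat (i : ℕ) : ℕ := if i = 2 ∨ i = 3 then 1 else if 5 ≤ i ∧ i % 3 ≠ 2 then 1 else 0

lemma Hpat_zero {i : ℕ} (h : (i < 5 ∨ i % 3 = 2) ∧ i ≠ 2 ∧ i ≠ 3) : Hpat i = 0 := by
  unfold Hpat
  rw [if_neg (by omega), if_neg (by omega)]

lemma Hpat_one {i : ℕ} (h : i = 2 ∨ i = 3 ∨ (5 ≤ i ∧ i % 3 ≠ 2)) : Hpat i = 1 := by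
  unfold Hpat
  by_cases h23 : i = 2 ∨ i = 3
  · rw [if_pos h23]
  · rw [if_neg h23, if_pos (by omega)]

/-! ### Refutations and constructions of sources -/

lemma refute0 (k : ℕ) (H : ℕ → ℕ) : ∀ s, ¬ okSrc (wstr k) 1 H 0 2 s :=
  fun _ h => absurd h.1 (by omega)

lemma refute1 (k : ℕ) (H : ℕ → ℕ) : ∀ s, ¬ okSrc (wstr k) 1 H 1 2 s := by
  rintro s ⟨hs, hlen, hsub, -⟩
  rw [wstr_length] at hlen
  have hs0 : s = 0 := by omega
  subst hs0
  have e0 : pat (0+0) = pat (1+0) := pat_eq_of hsub (by norm_num) (by omega) (by omega)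
  exact absurd e0 (by decide)

lemma refute4 (k : ℕ) (H : ℕ → ℕ) : ∀ s, ¬ okSrc (wstr k) 1 H 4 2 s := by
  rintro s ⟨hs, hlen, hsub, -⟩
  rw [wstr_length] at hlen
  have e0 : pat (s+0) = pat (4+0) := pat_eq_of hsub (by norm_num) (by omega) (by omega)
  interval_cases s <;> exact absurd e0 (by decide)

lemma refuteA (k b : ℕ) (H : ℕ → ℕ) (hb5 : 5 ≤ b) (hb3 : b % 3 = 2) (hble : b ≤ 3*k+2)
    (hH : ∀ i < b, H i = Hpat i) : ∀ s, ¬ okSrc (wstr k) 1 H b 2 s := by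
  rintro s ⟨hs, hlen, hsub, hht⟩
  rw [wstr_length] at hlen
  have e0 : pat (s+0) = pat (b+0) := pat_eq_of hsub (by norm_num) (by omega) (by omega)
  have e1 : pat (s+1) = pat (b+1) := pat_eq_of hsub (by norm_num) (by omega) (by omega)
  rw [Nat.add_zero, Nat.add_zero, pat_mod2 hb5 hb3] at e0
  rw [pat_mod0 (b := b+1) (by omega) (by omega)] at e1
  have hh1 := hht 1 (by norm_num)
  by_cases hs5 : s < 5
  · interval_cases s
    · exact absurd e0 (by decide)
    · rw [Nat.mod_eq_of_lt (show 1 < b - 1 by omega)] at hh1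
      norm_num at hh1
      rw [hH 2 (by omega), Hpat_one (by omega)] at hh1
      omega
    · exact absurd e0 (by decide)
    · exact absurd e1 (by decide)
    · exact absurd e0 (by decide)
  · have hsm : s % 3 = 2 := by
      rcases (by omega : (s+1) % 3 = 0 ∨ (s+1) % 3 = 1 ∨ (s+1) % 3 = 2) with h|h|h
      · omega
      · rw [pat_mod1 (b := s+1) (by omega) h] at e1; exact absurd e1 (by decide)
      · rw [pat_mod2 (b := s+1) (by omega) h] at e1; exact absurd e1 (by decide)
    have hd : 3 ≤ b - s := by omega
    rw [Nat.mod_eq_of_lt (show 1 < b - s by omega)] at hh1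
    rw [hH (s+1) (by omega),
        Hpat_one (Or.inr (Or.inr ⟨by omega, by omega⟩))] at hh1
    omega

lemma refuteB (k b : ℕ) (H : ℕ → ℕ) (hb : b = 2 ∨ b = 6 ∨ (9 ≤ b ∧ b % 3 = 0))
    (hH : ∀ i < b, H i = Hpat i) : ∀ s, ¬ okSrc (wstr k) 1 H b 3 s := by
  rintro s ⟨hs, hlen, hsub, hht⟩
  rw [wstr_length] at hlen
  rcases hb with hb | hb | hb
  · subst hb
    have e2 : pat (s+2) = pat (2+2) := pat_eq_of hsub (by norm_num) (by omega) (by omega)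
    interval_cases s <;> exact absurd e2 (by decide)
  · subst hb
    have e0 : pat (s+0) = pat (6+0) := pat_eq_of hsub (by norm_num) (by omega) (by omega)
    have e2 : pat (s+2) = pat (6+2) := pat_eq_of hsub (by norm_num) (by omega) (by omega)
    interval_cases s <;>
      first
        | exact absurd e0 (by decide)
        | exact absurd e2 (by decide)
  · obtain ⟨hb9, hb3⟩ := hb
    have e0 : pat (s+0) = pat (b+0) := pat_eq_of hsub (by norm_num) (by omega) (by omega)
    have e1 : pat (s+1) = pat (b+1) := pat_eq_of hsub (by norm_num) (by omega) (by omega)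
    have e2 : pat (s+2) = pat (b+2) := pat_eq_of hsub (by norm_num) (by omega) (by omega)
    rw [Nat.add_zero, Nat.add_zero, pat_mod0 (b := b) (by omega) hb3] at e0
    rw [pat_mod1 (b := b+1) (by omega) (by omega)] at e1
    rw [pat_mod2 (b := b+2) (by omega) (by omega)] at e2
    by_cases hs5 : s < 5
    · interval_cases s
      · exact absurd e2 (by decide)
      · exact absurd e0 (by decide)
      · exact absurd e2 (by decide)
      · exact absurd e0 (by decide)
      · exact absurd e0 (by decide)
    · have hsm : s % 3 = 0 := by
        rcases (by omega : s % 3 = 0 ∨ s % 3 = 1 ∨ s % 3 = 2) with h|h|h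
        · exact h
        · rw [pat_mod1 (b := s) (by omega) h] at e0; exact absurd e0 (by decide)
        · rw [pat_mod2 (b := s) (by omega) h] at e0; exact absurd e0 (by decide)
      have hh0 := hht 0 (by norm_num)
      rw [show s + 0 % (b-s) = s by simp, hH s hs,
          Hpat_one (Or.inr (Or.inr ⟨by omega, by omega⟩))] at hh0
      omega

lemma constructC (k b : ℕ) (H : ℕ → ℕ) (hk : 2 ≤ k)
    (hb : b = 2 ∨ b = 6 ∨ (9 ≤ b ∧ b % 3 = 0 ∧ b + 2 ≤ 3*k+5))
    (hH : ∀ i < b, H i = Hpat i) : okSrc (wstr k) 1 H b 2 0 := by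
  have hb2 : 2 ≤ b := by rcases hb with h|h|h <;> omega
  have hblen : b + 2 ≤ 3*k+5 := by rcases hb with h|h|h <;> omega
  refine ⟨by omega, by rw [wstr_length]; omega, ?_, ?_⟩
  · apply sub_eq
    intro i hi
    rw [wget k _ (by omega), wget k _ (by omega)]
    congr 1
    interval_cases i
    · rcases hb with h|h|h
      · subst h; decide
      · subst h; decide
      · rw [Nat.add_zero, Nat.add_zero, pat_mod0 (b := b) (by omega) h.2.1]; decide
    · rcases hb with h|h|h
      · subst h; decide
      · subst h; decide
      · rw [pat_mod1 (b := b+1) (by omega) (by omega)]; decide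
  · intro i hi
    rw [Nat.sub_zero, Nat.zero_add, Nat.mod_eq_of_lt (by omega), hH i (by omega),
        Hpat_zero (by omega)]


/-! ### ghCount step lemmas -/

lemma ghCount_end (T : List α) (h b : ℕ) (H : ℕ → ℕ) (hb : T.length ≤ b) :
    ghCount T h b H = 0 := by
  rw [ghCount, dif_neg (by omega)]

lemma ghCount_lit (T : List α) (h b : ℕ) (H : ℕ → ℕ) (hb : b < T.length)
    (hL : ghLen T h H b ≤ 1) :
    ghCount T h b H = ghCount T h (b+1) (Function.update H b 0) + 1 := by
  rw [ghCount, dif_pos hb, dif_neg (by omega)]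

lemma ghCount_phrase2 (T : List α) (h b : ℕ) (H : ℕ → ℕ) (hb : b < T.length)
    (hL : ghLen T h H b = 2) (hs : sInf {s | okSrc T h H b 2 s} = 0) :
    ghCount T h b H = ghCount T h (b+2)
      (fun i => if b ≤ i ∧ i < b + 2 then H ((i - b) % b) + 1 else H i) + 1 := by
  rw [ghCount, dif_pos hb, dif_pos (by omega)]
  simp only [hL, hs, Nat.zero_add, Nat.sub_zero]

/-! ### The main loop of the greedy parsing -/

lemma loop (k : ℕ) (hk : 2 ≤ k) : ∀ n b (H : ℕ → ℕ), 8 ≤ b → b % 3 = 2 →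
    b + 3*n = 3*k+2 → (∀ i < b, H i = Hpat i) →
    ghCount (wstr k) 1 b H = 2*n + 2 := by
  intro n
  induction n with
  | zero =>
    intro b H hb8 hb3 hbn hH
    have hb : b = 3*k+2 := by omega
    subst hb
    rw [ghCount_lit _ _ _ _ (by rw [wstr_length]; omega)
        (ghLen_le_one (refuteA k _ H (by omega) (by omega) (by omega) hH))]
    set H1 := Function.update H (3*k+2) 0 with hH1def
    have hH1 : ∀ i < 3*k+3, H1 i = Hpat i := by
      intro i hi
      rcases eq_or_lt_of_le (show i ≤ 3*k+2 by omega) with h | h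
      · rw [hH1def, h, Function.update_self, Hpat_zero (by omega)]
      · rw [hH1def, Function.update_of_ne (by omega), hH i (by omega)]
    have hC : okSrc (wstr k) 1 H1 (3*k+3) 2 0 :=
      constructC k _ H1 hk (Or.inr (Or.inr ⟨by omega, by omega, by omega⟩)) hH1
    rw [show 3*k+2+1 = 3*k+3 by omega]
    rw [ghCount_phrase2 _ _ _ _ (by rw [wstr_length]; omega)
        (ghLen_eq_two ⟨0, hC⟩ (refuteB k _ H1 (Or.inr (Or.inr ⟨by omega, by omega⟩)) hH1))
        (Nat.sInf_eq_zero.mpr (Or.inl hC))]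
    rw [ghCount_end _ _ _ _ (by rw [wstr_length]; try omega)]
  | succ n ih =>
    intro b H hb8 hb3 hbn hH
    rw [ghCount_lit _ _ _ _ (by rw [wstr_length]; omega)
        (ghLen_le_one (refuteA k _ H (by omega) (by omega) (by omega) hH))]
    set H1 := Function.update H b 0 with hH1def
    have hH1 : ∀ i < b+1, H1 i = Hpat i := by
      intro i hi
      rcases eq_or_lt_of_le (show i ≤ b by omega) with h | h
      · rw [hH1def, h, Function.update_self, Hpat_zero (by omega)]
      · rw [hH1def, Function.update_of_ne (by omega), hH i (by omega)]
    have hC : okSrc (wstr k) 1 H1 (b+1) 2 0 :=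
      constructC k _ H1 hk (Or.inr (Or.inr ⟨by omega, by omega, by omega⟩)) hH1
    rw [ghCount_phrase2 _ _ _ _ (by rw [wstr_length]; omega)
        (ghLen_eq_two ⟨0, hC⟩ (refuteB k _ H1 (Or.inr (Or.inr ⟨by omega, by omega⟩)) hH1))
        (Nat.sInf_eq_zero.mpr (Or.inl hC))]
    set H2 := fun i => if b+1 ≤ i ∧ i < b+1+2 then H1 ((i - (b+1)) % (b+1)) + 1 else H1 i
      with hH2def
    have hH2 : ∀ i < b+3, H2 i = Hpat i := by
      intro i hi
      by_cases hcase : b+1 ≤ i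
      · rw [hH2def]
        simp only
        rw [if_pos ⟨hcase, by omega⟩, Nat.mod_eq_of_lt (by omega),
            hH1 (i - (b+1)) (by omega), Hpat_zero (by omega), Hpat_one (by omega)]
      · rw [hH2def]
        simp only
        rw [if_neg (by omega), hH1 i (by omega)]
    rw [show b+1+2 = b+3 by omega]
    rw [ih (b+3) H2 (by omega) (by omega) (by omega) hH2]
    ring


/-! ### The greedy parsing of the prefix -/

lemma prefix6 (k : ℕ) (hk : 2 ≤ k) :
    ghCount (wstr k) 1 0 (fun _ => 0) = 2*k + 4 := by
  have hlen : (wstr k).length = 3*k+5 := wstr_length k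
  -- b = 0 : literal
  rw [ghCount_lit _ _ _ _ (by omega) (ghLen_le_one (refute0 k _))]
  set H1 := Function.update (fun _ => 0) 0 0 with hH1def
  -- b = 1 : literal
  rw [ghCount_lit _ _ _ _ (by omega) (ghLen_le_one (refute1 k _))]
  set H2 := Function.update H1 1 0 with hH2def
  have hH2 : ∀ i < 2, H2 i = Hpat i := by
    intro i hi
    interval_cases i <;>
      norm_num [hH2def, hH1def, Function.update_apply, Hpat]
  -- b = 2 : phrase "ab"
  have hC2 : okSrc (wstr k) 1 H2 2 2 0 := constructC k 2 H2 hk (Or.inl rfl) hH2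
  rw [show (0:ℕ)+1+1 = 2 by norm_num]
  rw [ghCount_phrase2 _ _ _ _ (by omega)
      (ghLen_eq_two ⟨0, hC2⟩ (refuteB k 2 H2 (Or.inl rfl) hH2))
      (Nat.sInf_eq_zero.mpr (Or.inl hC2))]
  set H3 := fun i => if 2 ≤ i ∧ i < 2 + 2 then H2 ((i - 2) % 2) + 1 else H2 i with hH3def
  have hH3 : ∀ i < 5, H3 i = Hpat i := by
    intro i hi
    interval_cases i <;>
      norm_num [hH3def, hH2def, hH1def, Function.update_apply, Hpat]
  -- b = 4 : literal
  rw [show (2:ℕ)+2 = 4 by norm_num]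
  rw [ghCount_lit _ _ _ _ (by omega) (ghLen_le_one (refute4 k _))]
  set H4 := Function.update H3 4 0 with hH4def
  have hH4 : ∀ i < 5, H4 i = Hpat i := by
    intro i hi
    rw [hH4def, Function.update_apply]
    split
    · rename_i h; rw [h, Hpat_zero (by omega)]
    · exact hH3 i hi
  have hH4' : ∀ i < 6, H4 i = Hpat i := by
    intro i hi
    rcases (by omega : i < 5 ∨ i = 5) with h | h
    · exact hH4 i h
    · rw [h, hH4def, Function.update_apply, if_neg (by omega), hH3def]
      norm_num [hH2def, hH1def, Function.update_apply, Hpat]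
  -- b = 5 : literal
  rw [show (4:ℕ)+1 = 5 by norm_num]
  rw [ghCount_lit _ _ _ _ (by omega)
      (ghLen_le_one (refuteA k 5 H4 (by omega) (by omega) (by omega) hH4))]
  set H5 := Function.update H4 5 0 with hH5def
  have hH5 : ∀ i < 6, H5 i = Hpat i := by
    intro i hi
    rw [hH5def, Function.update_apply]
    split
    · rename_i h; rw [h, Hpat_zero (by omega)]
    · exact hH4' i hi
  -- b = 6 : phrase "ab"
  have hC6 : okSrc (wstr k) 1 H5 6 2 0 :=
    constructC k 6 H5 hk (Or.inr (Or.inl rfl)) hH5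
  rw [show (5:ℕ)+1 = 6 by norm_num]
  rw [ghCount_phrase2 _ _ _ _ (by omega)
      (ghLen_eq_two ⟨0, hC6⟩ (refuteB k 6 H5 (Or.inr (Or.inl rfl)) hH5))
      (Nat.sInf_eq_zero.mpr (Or.inl hC6))]
  set H6 := fun i => if 6 ≤ i ∧ i < 6 + 2 then H5 ((i - 6) % 6) + 1 else H5 i with hH6def
  have hH6 : ∀ i < 8, H6 i = Hpat i := by
    intro i hi
    rw [hH6def]
    simp only
    by_cases hcase : 6 ≤ i
    · rw [if_pos ⟨hcase, by omega⟩, hH5 ((i-6) % 6) (by omega),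
          Hpat_zero (by omega), Hpat_one (by omega)]
    · rw [if_neg (by omega), hH5 i (by omega)]
  -- the main loop
  rw [show (6:ℕ)+2 = 8 by norm_num]
  rw [loop k hk (k-2) 8 H6 (by omega) (by omega) (by omega) hH6]
  omega

/-- For `w_k = ababc(bab)^k` (`k ≥ 2`): the optimal 1-bounded LZ-like encoding has
size at most 8, while the greedy 1-bounded parsing has size at least `2k`; hence
greedy height-bounded parsing can be a factor `Ω(k)` larger than optimal. -/
theorem stmt18 (k : ℕ) (hk : 2 ≤ k) :
    zh (wstr k) 1 ≤ 8 ∧ 2 * k ≤ ghCount (wstr k) 1 0 (fun _ => 0) := by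
  constructor
  · -- optimal: the parsing a|b|ab|c|b|a|b|(bab)^{k-1}
    apply Nat.sInf_le
    refine ⟨[(1,0),(1,0),(2,0),(1,0),(1,0),(1,0),(1,0),(3*k-3,5)], ⟨?_, ?_, ?_⟩, ?_, by simp⟩
    · intro q hq
      fin_cases hq <;> simp <;> omega
    · rw [wstr_length]
      simp
      omega
    · intro j hj hl2
      simp only [List.length_cons, List.length_nil] at hj
      interval_cases j <;>
        simp only [lenOf, startOf, srcOf, List.getElem?_cons_zero, List.getElem?_cons_succ,
          List.take, List.map_cons, List.map_nil, List.sum_cons, List.sum_nil,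
          Option.map_some, Option.getD_some] at hl2 ⊢ <;>
        try omega
      · -- j = 2 : the phrase "ab" with source 0
        refine ⟨by norm_num, ?_⟩
        apply sub_eq
        intro i hi
        rw [wget k _ (by omega), wget k _ (by omega)]
        interval_cases i <;> rfl
      · -- j = 7 : the phrase (bab)^{k-1} with source 5
        refine ⟨by norm_num, ?_⟩
        apply sub_eq
        intro i hi
        rw [wget k _ (by omega), wget k _ (by omega)]
        congr 1
        unfold pat
        rw [if_neg (by omega), if_neg (by omega)]
        congr 1
        omega
    · -- 1-bounded height function
      refine ⟨fun i => if i = 2 ∨ i = 3 ∨ 8 ≤ i then 1 else 0, ?_, ?_⟩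
      · intro j hj i hi1 hi2
        simp only [List.length_cons, List.length_nil] at hj
        interval_cases j <;>
          simp only [lenOf, startOf, srcOf, List.getElem?_cons_zero, List.getElem?_cons_succ,
            List.take, List.map_cons, List.map_nil, List.sum_cons, List.sum_nil,
            Option.map_some, Option.getD_some] at hi1 hi2 ⊢ <;>
          refine ⟨fun hlen1 => ?_, fun hlen2 => ?_⟩ <;>
          try omega
        · -- j = 0
          rw [if_neg (by omega)]
        · -- j = 1
          rw [if_neg (by omega)]
        · -- j = 2
          rw [if_pos (by omega), if_neg (by omega)]
        · rw [if_neg (by omega)]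
        · rw [if_neg (by omega)]
        · rw [if_neg (by omega)]
        · rw [if_neg (by omega)]
        · -- j = 7
          have hm : (i - 8) % 3 < 3 := Nat.mod_lt _ (by norm_num)
          rw [if_pos (by omega), if_neg (by omega)]
      · intro i hi
        simp only
        split <;> norm_num
  · rw [prefix6 k hk]
    omega
end

section
/- In the greedy modified parsing of a string T, every phrase starting at position b has length at least max(1, lpf_T(b)); that is, each phrase of the greedy modified parsing extends at least to the end of the greedy LZ77 phrase that would start at the same position. Consequently, the number of phrases of the greedy modified parsing is at most z(T), the number of phrases of the greedy LZ77 parsing. -/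
variable {α : Type*}

/-- Validity condition for a greedy modified phrase `T[b..b+ℓ)`: for every
`1 ≤ ℓ' ≤ ℓ`, letting `p'` be the minimum period of `T[b..b+ℓ')`, either `p' = 1`
or `T[b..b+p')` has an occurrence starting before `b`. -/
def gmOk (T : List α) (b ℓ : ℕ) : Prop :=
  b + ℓ ≤ T.length ∧ ∀ ℓ', 1 ≤ ℓ' → ℓ' ≤ ℓ →
    minPeriod (sub T b ℓ') = 1 ∨
    ∃ s < b, sub T s (minPeriod (sub T b ℓ')) = sub T b (minPeriod (sub T b ℓ'))

/-- Length of the greedy modified phrase starting at position `b`. -/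
noncomputable def gmLen (T : List α) (b : ℕ) : ℕ := sSup {ℓ | 1 ≤ ℓ ∧ gmOk T b ℓ}

/-- Number of phrases of the greedy modified parsing of `T[b..)`;
`gmCount T 0 = z̃` is the size of the greedy modified parsing of `T`. -/
noncomputable def gmCount (T : List α) (b : ℕ) : ℕ :=
  if hb : b < T.length then gmCount T (b + max 1 (gmLen T b)) + 1 else 0
termination_by T.length - b
decreasing_by
  have h1 : 1 ≤ max 1 (gmLen T b) := le_max_left _ _
  omega

section Aux

lemma sub_length' (T : List α) (i ℓ : ℕ) : (sub T i ℓ).length = min ℓ (T.length - i) := by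
  simp [sub]

lemma sub_take' (T : List α) (i ℓ m : ℕ) (h : m ≤ ℓ) : (sub T i ℓ).take m = sub T i m := by
  simp [sub, List.take_take, Nat.min_eq_left h]

lemma sub_drop' (T : List α) (i ℓ d : ℕ) : (sub T i ℓ).drop d = sub T (i + d) (ℓ - d) := by
  simp [sub, List.drop_take, List.drop_drop, Nat.add_comm]

lemma lpf_bdd (T : List α) (b : ℕ) :
    BddAbove {l | b + l ≤ T.length ∧ ∃ s < b, sub T s l = sub T b l} :=
  ⟨T.length, fun l hl => le_trans (Nat.le_add_left l b) hl.1⟩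

lemma lpf_mem (T : List α) (b : ℕ) (h : 0 < lpf T b) :
    b + lpf T b ≤ T.length ∧ ∃ s < b, sub T s (lpf T b) = sub T b (lpf T b) := by
  have hmem : lpf T b ∈ {l | b + l ≤ T.length ∧ ∃ s < b, sub T s l = sub T b l} := by
    apply Nat.sSup_mem _ (lpf_bdd T b)
    rcases Set.eq_empty_or_nonempty {l | b + l ≤ T.length ∧ ∃ s < b, sub T s l = sub T b l}
      with he | hne
    · exfalso
      have : lpf T b = 0 := by rw [lpf, he, csSup_empty]; rfl
      omega
    · exact hne
  exact hmem

lemma lpf_ge (T : List α) (b l : ℕ) (h1 : b + l ≤ T.length)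
    (h2 : ∃ s < b, sub T s l = sub T b l) : l ≤ lpf T b :=
  le_csSup (lpf_bdd T b) ⟨h1, h2⟩

lemma minPeriod_mem (w : List α) (hw : w ≠ []) : IsPeriod w (minPeriod w) := by
  have : sInf {p | IsPeriod w p} ∈ {p | IsPeriod w p} := by
    apply Nat.sInf_mem
    exact ⟨w.length, List.length_pos_iff.mpr hw, le_refl _, fun i hi => absurd hi (by omega)⟩
  exact this

lemma minPeriod_le_length (w : List α) (hw : w ≠ []) : minPeriod w ≤ w.length :=
  (minPeriod_mem w hw).2.1

lemma minPeriod_pos (w : List α) (hw : w ≠ []) : 0 < minPeriod w :=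
  (minPeriod_mem w hw).1

lemma gm_ge_lpf (T : List α) (b : ℕ) (hb : b < T.length) : max 1 (lpf T b) ≤ gmLen T b := by
  have hbdd : BddAbove {ℓ | 1 ≤ ℓ ∧ gmOk T b ℓ} :=
    ⟨T.length, fun ℓ hℓ => le_trans (Nat.le_add_left ℓ b) hℓ.2.1⟩
  apply le_csSup hbdd
  rcases Nat.eq_zero_or_pos (lpf T b) with h0 | hpos
  · rw [h0]
    refine ⟨le_refl _, by omega, fun ℓ' h1 h2 => ?_⟩
    have hℓ' : ℓ' = 1 := by omega
    subst hℓ'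
    left
    have hw : (sub T b 1).length = 1 := by rw [sub_length']; omega
    have hne : sub T b 1 ≠ [] := by
      intro h
      rw [h] at hw
      simp at hw
    have h1 := minPeriod_pos _ hne
    have h2 := minPeriod_le_length _ hne
    omega
  · have hL : max 1 (lpf T b) = lpf T b := by omega
    rw [hL]
    obtain ⟨hlen, s, hs, heq⟩ := lpf_mem T b hpos
    refine ⟨hpos, hlen, fun ℓ' h1 h2 => ?_⟩
    right
    have hwl : (sub T b ℓ').length = ℓ' := by rw [sub_length']; omega
    have hne : sub T b ℓ' ≠ [] := by
      intro h
      rw [h] at hwl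
      simp at hwl
      omega
    have hple : minPeriod (sub T b ℓ') ≤ ℓ' := by
      have := minPeriod_le_length _ hne; omega
    refine ⟨s, hs, ?_⟩
    have hpL : minPeriod (sub T b ℓ') ≤ lpf T b := le_trans hple h2
    calc sub T s (minPeriod (sub T b ℓ'))
        = (sub T s (lpf T b)).take (minPeriod (sub T b ℓ')) := (sub_take' T s _ _ hpL).symm
      _ = (sub T b (lpf T b)).take (minPeriod (sub T b ℓ')) := by rw [heq]
      _ = sub T b (minPeriod (sub T b ℓ')) := sub_take' T b _ _ hpL

lemma lz_mono (T : List α) : ∀ n b b', T.length - b ≤ n → b ≤ b' →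
    lzCount T b' ≤ lzCount T b := by
  intro n
  induction n with
  | zero =>
    intro b b' hn hbb
    have hb' : ¬ b' < T.length := by omega
    have hb : ¬ b < T.length := by omega
    rw [lzCount, dif_neg hb', lzCount, dif_neg hb]
  | succ n ih =>
    intro b b' hn hbb
    by_cases hb' : b' < T.length
    · have hb : b < T.length := by omega
      rcases Nat.eq_or_lt_of_le hbb with rfl | hlt
      · exact le_refl _
      · set c := b + max 1 (lpf T b) with hc
        have hcb : b < c := by have := le_max_left 1 (lpf T b); omega
        have hrec : lzCount T b = lzCount T c + 1 := by rw [lzCount, dif_pos hb]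
        by_cases hbc : c ≤ b'
        · have := ih c b' (by omega) hbc
          omega
        · -- b < b' < c, so lpf T b ≥ 2
          push_neg at hbc
          have hL2 : 2 ≤ max 1 (lpf T b) := by omega
          have hpos : 0 < lpf T b := by
            rcases le_or_gt (lpf T b) 1 with h | h
            · rw [max_eq_left h] at hL2; omega
            · omega
          have hLe : max 1 (lpf T b) = lpf T b := by omega
          obtain ⟨hlen, s, hs, heq⟩ := lpf_mem T b hpos
          set d := b' - b with hd
          set l' := lpf T b - d with hl'
          have hdl : d < lpf T b := by omega
          have hge : l' ≤ lpf T b' := by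
            apply lpf_ge
            · omega
            · refine ⟨s + d, by omega, ?_⟩
              have e1 : (sub T s (lpf T b)).drop d = sub T (s + d) l' := by
                rw [sub_drop']
              have e2 : (sub T b (lpf T b)).drop d = sub T (b + d) l' := by
                rw [sub_drop']
              have hb'eq : b + d = b' := by omega
              rw [hb'eq] at e2
              rw [← e1, ← e2, heq]
          have hb'' : c ≤ b' + max 1 (lpf T b') := by
            have : l' ≤ max 1 (lpf T b') := le_trans hge (le_max_right _ _)
            omega
          have hrec' : lzCount T b' = lzCount T (b' + max 1 (lpf T b')) + 1 := by
            rw [lzCount, dif_pos hb']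
          have := ih c (b' + max 1 (lpf T b')) (by omega) hb''
          omega
    · rw [lzCount, dif_neg hb']
      exact Nat.zero_le _

lemma gm_le_lz (T : List α) : ∀ n b, T.length - b ≤ n → gmCount T b ≤ lzCount T b := by
  intro n
  induction n with
  | zero =>
    intro b hn
    have hb : ¬ b < T.length := by omega
    rw [gmCount, dif_neg hb, lzCount, dif_neg hb]
  | succ n ih =>
    intro b hn
    by_cases hb : b < T.length
    · rw [gmCount, dif_pos hb, lzCount, dif_pos hb]
      set c := b + max 1 (lpf T b) with hc
      set B := b + max 1 (gmLen T b) with hB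
      have h1 := gm_ge_lpf T b hb
      have hcB : c ≤ B := by
        have : max 1 (lpf T b) ≤ max 1 (gmLen T b) :=
          le_trans h1 (le_max_right _ _)
        omega
      have hbB : b < B := by have := le_max_left 1 (gmLen T b); omega
      have h2 : gmCount T B ≤ lzCount T B := ih B (by omega)
      have h3 : lzCount T B ≤ lzCount T c :=
        lz_mono T n c B (by have := le_max_left 1 (lpf T b); omega) hcB
      omega
    · rw [gmCount, dif_neg hb, lzCount, dif_neg hb]

end Aux

/-- Every phrase of the greedy modified parsing starting at position `b` has length
at least `max 1 (lpf_T(b))`, i.e. it extends at least to the end of the greedy LZ77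
phrase that would start at the same position; consequently the greedy modified
parsing has at most `z(T)` phrases. -/
theorem stmt19 (T : List α) :
    (∀ b < T.length, max 1 (lpf T b) ≤ gmLen T b) ∧ gmCount T 0 ≤ lzCount T 0 :=
  ⟨fun b hb => gm_ge_lpf T b hb, gm_le_lz T T.length 0 (by omega)⟩
end
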